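/- arXiv:2511.16611 — 2 statements merged into one kernel-verified Lean document; each statement's English description precedes it below -/
import Mathlib

section
/- Let A be a circular automaton, σ a congruence, and (p₁,q₁), (p₂,q₂) ∈ σ with gcd(d(p₁,q₁), d(p₂,q₂)) = k. Then there exists (p,q) ∈ σ with d(p,q) = k. -/
/-!
Identify the states with `ℤ/nℤ` so that `a` acts as `q ↦ q + 1`. Then `d(p, q)` is the cyclic
norm `min (c, n - c)` of `c = q - p`, and a congruence is invariant under translation, so the
translations `c` with `p σ (p + c)` for all `p` form a subgroup of `ℤ/nℤ` containing `±(q - p)`,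
hence `d(p, q)`, for every pair `p σ q`. By Bézout it contains `k = gcd(d₁, d₂)`; as `k` is `0`
or bounded by a nonzero `dᵢ ≤ n / 2`, the pair `(p₁, p₁ + k)` lies in `σ` at distance exactly `k`.
-/

def wordAct {n : ℕ} {A : Type} (δ : Fin n → A → Fin n) (p : Fin n) (u : List A) : Fin n :=
  u.foldl δ p

noncomputable def relDist {n : ℕ} {A : Type} (δ : Fin n → A → Fin n) (a : A) (p q : Fin n) : ℕ :=
  sInf {k : ℕ | wordAct δ p (List.replicate k a) = q ∨ wordAct δ q (List.replicate k a) = p}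

/-- The cyclic successor `q ↦ q + 1 (mod n)` on `Fin n`. -/
def cyc {n : ℕ} (q : Fin n) : Fin n :=
  ⟨(q.val + 1) % n, Nat.mod_lt _ (by have := q.isLt; omega)⟩

def IsCirculating {n : ℕ} {A : Type} (δ : Fin n → A → Fin n) (a : A) : Prop :=
  ∀ q : Fin n, δ q a = cyc q

def IsContracting {n : ℕ} {A : Type} (δ : Fin n → A → Fin n) (a : A) : Prop :=
  ∀ p q : Fin n, 1 < relDist δ a p q →
    ∃ u : List A, 1 ≤ relDist δ a (wordAct δ p u) (wordAct δ q u) ∧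
      relDist δ a (wordAct δ p u) (wordAct δ q u) < relDist δ a p q

def IsWeaklyContractingPair {n : ℕ} {A : Type} (δ : Fin n → A → Fin n) (a : A) (p q : Fin n) : Prop :=
  ∀ m : ℕ, (∀ u : List A, wordAct δ p u ≠ wordAct δ q u →
      m ∣ Nat.gcd (relDist δ a (wordAct δ p u) (wordAct δ q u)) n) → m = 1

def IsWeaklyContracting {n : ℕ} {A : Type} (δ : Fin n → A → Fin n) (a : A) : Prop :=
  ∀ p q : Fin n, p ≠ q → IsWeaklyContractingPair δ a p q

def IsCongruence {n : ℕ} {A : Type} (δ : Fin n → A → Fin n) (σ : Fin n → Fin n → Prop) : Prop :=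
  Equivalence σ ∧ ∀ (p q : Fin n) (u : List A), σ p q → σ (wordAct δ p u) (wordAct δ q u)

def IsSimple {n : ℕ} {A : Type} (δ : Fin n → A → Fin n) : Prop :=
  ∀ σ : Fin n → Fin n → Prop, IsCongruence δ σ → (∀ x y, σ x y → x = y) ∨ (∀ x y, σ x y)

def IsSynchronizing {n : ℕ} {A : Type} (δ : Fin n → A → Fin n) : Prop :=
  ∃ u : List A, ∀ p q : Fin n, wordAct δ p u = wordAct δ q u

open Fin.CommRing

def circNorm {n : ℕ} [NeZero n] (c : Fin n) : ℕ :=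
  min c.val (-c).val

section circNorm

variable {n : ℕ} [NeZero n]

lemma natCast_circNorm_eq_or (c : Fin n) :
    (circNorm c : Fin n) = c ∨ (circNorm c : Fin n) = -c := by
  rcases min_choice c.val (-c).val with h | h
  · exact .inl (by rw [circNorm, h, Fin.cast_val_eq_self])
  · exact .inr (by rw [circNorm, h, Fin.cast_val_eq_self])

lemma circNorm_le_of_natCast_eq_or {c : Fin n} {j : ℕ}
    (hj : (j : Fin n) = c ∨ (j : Fin n) = -c) : circNorm c ≤ j := by
  rcases hj with hj | hj
  · exact (min_le_left _ _).trans (hj ▸ Fin.val_natCast j n ▸ Nat.mod_le j n)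
  · exact (min_le_right _ _).trans (hj ▸ Fin.val_natCast j n ▸ Nat.mod_le j n)

lemma two_mul_circNorm_le (c : Fin n) : 2 * circNorm c ≤ n := by
  have hneg : (-c).val = (n - c.val) % n := by rw [Fin.neg_def]
  have := c.isLt
  rcases Nat.eq_zero_or_pos c.val with h | h
  · simp [circNorm, h]
  · rw [circNorm, hneg, Nat.mod_eq_of_lt (by omega)]
    omega

lemma circNorm_natCast {k : ℕ} (hk : 2 * k ≤ n) : circNorm (k : Fin n) = k := by
  have hkn : k < n := by have := NeZero.pos n; omega
  have hval : (k : Fin n).val = k := by rw [Fin.val_natCast, Nat.mod_eq_of_lt hkn]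
  have hneg : (-(k : Fin n)).val = (n - k) % n := by rw [Fin.neg_def, hval]
  rcases Nat.eq_zero_or_pos k with rfl | hpos
  · simp [circNorm]
  · rw [circNorm, hval, hneg, Nat.mod_eq_of_lt (by omega)]
    omega

lemma natCast_circNorm_mem {H : AddSubgroup (Fin n)} {c : Fin n} (hc : c ∈ H) :
    (circNorm c : Fin n) ∈ H := by
  rcases natCast_circNorm_eq_or c with h | h <;> rw [h]
  · exact hc
  · exact H.neg_mem hc

end circNorm

lemma natCast_gcd_mem {R : Type*} [Ring R] {H : AddSubgroup R} {a b : ℕ}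
    (ha : (a : R) ∈ H) (hb : (b : R) ∈ H) : (a.gcd b : R) ∈ H := by
  have hbez : (a.gcd b : R) = a.gcdA b • (a : R) + a.gcdB b • (b : R) := by
    rw [zsmul_eq_mul, zsmul_eq_mul, ← Int.cast_natCast, Nat.gcd_eq_gcd_ab]
    push_cast
    rw [Int.cast_comm, Int.cast_comm]
  rw [hbez]
  exact H.add_mem (H.zsmul_mem ha _) (H.zsmul_mem hb _)

section Circulating

variable {n : ℕ} [NeZero n] {A : Type} {δ : Fin n → A → Fin n} {a : A}

lemma cyc_eq_add_one (q : Fin n) : cyc q = q + 1 := by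
  ext
  simp only [cyc, Fin.val_add, Fin.val_one', Nat.add_mod_mod]

lemma IsCirculating.wordAct_replicate (ha : IsCirculating δ a) (p : Fin n) (m : ℕ) :
    wordAct δ p (List.replicate m a) = p + m := by
  induction m generalizing p with
  | zero => simp [wordAct]
  | succ m ih =>
    change wordAct δ (δ p a) (List.replicate m a) = _
    rw [ih, ha, cyc_eq_add_one]
    push_cast
    ring

lemma IsCirculating.relDist_eq (ha : IsCirculating δ a) (p q : Fin n) :
    relDist δ a p q = circNorm (q - p) := by
  refine IsLeast.csInf_eq ⟨?_, fun j hj => circNorm_le_of_natCast_eq_or ?_⟩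
  · simp only [Set.mem_ofPred_eq, ha.wordAct_replicate]
    rcases natCast_circNorm_eq_or (q - p) with h | h <;> rw [h]
    · exact .inl (add_sub_cancel p q)
    · exact .inr (by abel)
  · simp only [Set.mem_ofPred_eq, ha.wordAct_replicate] at hj
    rcases hj with hj | hj
    · exact .inl (eq_sub_of_add_eq' hj)
    · exact .inr (by rw [neg_sub]; exact eq_sub_of_add_eq' hj)

lemma IsCirculating.two_mul_relDist_le (ha : IsCirculating δ a) (p q : Fin n) :
    2 * relDist δ a p q ≤ n :=
  ha.relDist_eq p q ▸ two_mul_circNorm_le (q - p)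

def shiftSubgroup {σ : Fin n → Fin n → Prop} (hσ : Equivalence σ) : AddSubgroup (Fin n) where
  carrier := {c | ∀ p, σ p (p + c)}
  zero_mem' p := by simpa using hσ.refl p
  add_mem' {c c'} hc hc' p := by
    simpa [add_assoc] using hσ.trans (hc p) (hc' (p + c))
  neg_mem' {c} hc p := by
    simpa using hσ.symm (hc (p + -c))

variable {σ : Fin n → Fin n → Prop}

lemma IsCongruence.add_right (hσ : IsCongruence δ σ) (ha : IsCirculating δ a) {p q : Fin n}
    (h : σ p q) (c : Fin n) : σ (p + c) (q + c) := by
  simpa [ha.wordAct_replicate] using hσ.2 p q (List.replicate c.val a) h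

lemma IsCongruence.sub_mem_shiftSubgroup (hσ : IsCongruence δ σ) (ha : IsCirculating δ a)
    {p q : Fin n} (h : σ p q) : q - p ∈ shiftSubgroup hσ.1 := fun r => by
  convert hσ.add_right ha h (r - p) using 1 <;> abel

lemma IsCongruence.natCast_relDist_mem (hσ : IsCongruence δ σ) (ha : IsCirculating δ a)
    {p q : Fin n} (h : σ p q) : (relDist δ a p q : Fin n) ∈ shiftSubgroup hσ.1 :=
  ha.relDist_eq p q ▸ natCast_circNorm_mem (hσ.sub_mem_shiftSubgroup ha h)

end Circulating

theorem stmt7 (n : ℕ) (A : Type) (δ : Fin n → A → Fin n) (a : A)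
    (ha : IsCirculating δ a) (σ : Fin n → Fin n → Prop) (hσ : IsCongruence δ σ)
    (p₁ q₁ p₂ q₂ : Fin n) (h1 : σ p₁ q₁) (h2 : σ p₂ q₂) (k : ℕ)
    (hk : Nat.gcd (relDist δ a p₁ q₁) (relDist δ a p₂ q₂) = k) :
    ∃ p q : Fin n, σ p q ∧ relDist δ a p q = k := by
  have : NeZero n := ⟨by rintro rfl; exact p₁.elim0⟩
  have hkG : (k : Fin n) ∈ shiftSubgroup hσ.1 :=
    hk ▸ natCast_gcd_mem (hσ.natCast_relDist_mem ha h1) (hσ.natCast_relDist_mem ha h2)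
  have hk_le : k ≤ relDist δ a p₁ q₁ ∨ k = relDist δ a p₂ q₂ := by
    rcases Nat.eq_zero_or_pos (relDist δ a p₁ q₁) with h | h
    · exact .inr (by rw [← hk, h, Nat.gcd_zero_left])
    · exact .inl (hk ▸ Nat.gcd_le_left _ h)
  have hk_half : 2 * k ≤ n := by
    have := ha.two_mul_relDist_le p₁ q₁
    have := ha.two_mul_relDist_le p₂ q₂
    omega
  refine ⟨p₁, p₁ + k, hkG p₁, ?_⟩
  rw [ha.relDist_eq, add_sub_cancel_left, circNorm_natCast hk_half]
end

section
/- Let n be even and A_n the automaton on states q_1,...,q_n with circulating letter a (q_i·a = q_{i+1 mod n}) and letter b given by q_i·b = q_i if i ≤ n/2 and q_i·b = q_{n-i+1} if i > n/2. Then A_n is synchronizing (with (ba)^{n/2}b a reset word), and the vector v = (-1,1,-1,...,-1) ∈ ℂ^{n-1} (in the basis {q_i - q_1}) satisfies v·a = -v and v·b = 0, so the line spanned by v is invariant under the word action and the automaton is reducible. -/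
/-- The linear action of a word on `K`-linear combinations of states. -/
def actVec {n : ℕ} {A : Type} {K : Type} [Semiring K]
    (δ : Fin n → A → Fin n) (v : Fin n → K) (u : List A) : Fin n → K :=
  fun j => ∑ i, if wordAct δ i u = j then v i else 0

/-- The automaton `A_n`: `true` (= `a`) is the circulating letter; `false` (= `b`)
fixes the first `n/2` states and sends `q_i` to `q_{n-i+1}` for `i > n/2`
(0-based: `j ↦ n - 1 - j`). -/
def delta19 (n : ℕ) : Fin n → Bool → Fin n :=
  fun q x => if x then cyc q
    else if q.val < n / 2 then q else ⟨n - 1 - q.val, by have := q.isLt; omega⟩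

/-- The vector of `ℂQ` corresponding to `v = (-1, 1, -1, …, -1)` in the basis
`{q_i - q_1}`, namely `j ↦ (-1)^j` in 0-based coordinates. -/
noncomputable def w19 (n : ℕ) : Fin n → ℂ := fun j => (-1) ^ j.val


/-! The letter `b` retracts the states onto the first half, and the word `ba` moves every
state towards the (0-based) state `n / 2`, which it fixes; a state beyond the middle is
first reflected into the first half at the same distance from `n / 2`. So `(ba)^(n/2)` already
sends every state to `n / 2`.

On the alternating vector `w = ((-1)^j)` the rotation `a` acts by `-1` because `n` is even,
and `b` merges each `j < n / 2` with `n - 1 - j`, which has the opposite parity, so `w·b = 0`.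
The line `ℂ w` is therefore invariant under every letter, hence under every word. -/

section WordAction

variable {n : ℕ} {A K : Type} (δ : Fin n → A → Fin n)

theorem wordAct_append (p : Fin n) (u v : List A) :
    wordAct δ p (u ++ v) = wordAct δ (wordAct δ p u) v :=
  List.foldl_append

theorem wordAct_singleton (p : Fin n) (x : A) : wordAct δ p [x] = δ p x :=
  rfl

variable [Semiring K]

theorem actVec_nil (v : Fin n → K) : actVec δ v [] = v := by
  funext j
  exact Fintype.sum_ite_eq' j v

theorem actVec_singleton_apply (v : Fin n → K) (x : A) (j : Fin n) :
    actVec δ v [x] j = ∑ i with δ i x = j, v i := by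
  rw [Finset.sum_filter]
  rfl

theorem actVec_append (v : Fin n → K) (u u' : List A) :
    actVec δ v (u ++ u') = actVec δ (actVec δ v u) u' := by
  funext j
  simp_rw [actVec, wordAct_append, ← Finset.sum_filter]
  rw [Finset.sum_fiberwise_eq_sum_filter]
  simp

theorem actVec_smul (c : K) (v : Fin n → K) (u : List A) :
    actVec δ (c • v) u = c • actVec δ v u := by
  funext j
  simp [actVec, Finset.mul_sum, mul_ite]

theorem actVec_singleton_of_bijective {v : Fin n → K} {x : A} (c : K)
    (hx : Function.Bijective (δ · x)) (hv : ∀ i, v i = c * v (δ i x)) :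
    actVec δ v [x] = c • v := by
  funext j
  obtain ⟨k, rfl⟩ := hx.2 j
  simp [actVec_singleton_apply, hx.1.eq_iff, Finset.filter_eq', hv k]

theorem exists_actVec_eq_smul_of_forall_singleton {v : Fin n → K} (c : A → K)
    (hc : ∀ x, actVec δ v [x] = c x • v) (u : List A) : ∃ d : K, actVec δ v u = d • v := by
  induction u with
  | nil => exact ⟨1, by rw [actVec_nil, one_smul]⟩
  | cons x u ih =>
    obtain ⟨d, hd⟩ := ih
    refine ⟨c x * d, ?_⟩
    rw [← List.singleton_append, actVec_append, hc, actVec_smul, hd, smul_smul]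

end WordAction

theorem neg_one_pow_mod_of_even {R : Type*} [Ring R] {n : ℕ} (he : Even n) (k : ℕ) :
    (-1 : R) ^ (k % n) = (-1) ^ k := by
  rw [neg_one_pow_eq_pow_mod_two, Nat.mod_mod_of_dvd k (even_iff_two_dvd.mp he),
    ← neg_one_pow_eq_pow_mod_two]

section Automaton

variable {n : ℕ}

theorem delta19_false (q : Fin n) :
    delta19 n q false = if q.val < n / 2 then q else q.rev := by
  unfold delta19
  split_ifs <;> simp_all [Fin.ext_iff, Fin.val_rev]
  omega

theorem cyc_injective : Function.Injective (cyc : Fin n → Fin n) := by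
  intro p q h
  have h' : p.val + 1 ≡ q.val + 1 [MOD n] := congrArg Fin.val h
  exact Fin.ext (Nat.ModEq.add_right_cancel' 1 h' |>.eq_of_lt_of_lt p.isLt q.isLt)

theorem w19_cyc (he : Even n) (q : Fin n) : w19 n (cyc q) = -w19 n q := by
  simp [w19, cyc, neg_one_pow_mod_of_even he, pow_succ]

theorem w19_rev (he : Even n) (q : Fin n) : w19 n q.rev = -w19 n q := by
  have hn : n % 2 = 0 := Nat.even_iff.mp he
  have hq := q.isLt
  rw [w19, w19, Fin.val_rev, show -(-1 : ℂ) ^ q.val = (-1) ^ (q.val + 1) by ring,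
    neg_one_pow_eq_pow_mod_two, neg_one_pow_eq_pow_mod_two (n := q.val + 1)]
  congr 1
  omega

theorem actVec_delta19_true (he : Even n) :
    actVec (delta19 n) (w19 n) [true] = (-1 : ℂ) • w19 n :=
  actVec_singleton_of_bijective _ _ (Finite.injective_iff_bijective.mp cyc_injective)
    fun q => by simp [delta19, w19_cyc he]

theorem delta19_false_fiber_of_lt {j : Fin n} (hj : j.val < n / 2) :
    ({i | delta19 n i false = j} : Finset (Fin n)) = {j, j.rev} := by
  ext i
  simp only [delta19_false, Finset.mem_filter, Finset.mem_univ, true_and, Finset.mem_insert,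
    Finset.mem_singleton]
  by_cases hi : i.val < n / 2 <;> simp [hi, Fin.ext_iff, Fin.val_rev] <;> omega

theorem delta19_false_fiber_of_le (he : Even n) {j : Fin n} (hj : n / 2 ≤ j.val) :
    ({i | delta19 n i false = j} : Finset (Fin n)) = ∅ := by
  have hn : n % 2 = 0 := Nat.even_iff.mp he
  ext i
  simp only [delta19_false, Finset.mem_filter, Finset.mem_univ, true_and, Finset.notMem_empty,
    iff_false]
  by_cases hi : i.val < n / 2 <;> simp [hi, Fin.ext_iff, Fin.val_rev] <;> omega

theorem actVec_delta19_false (he : Even n) : actVec (delta19 n) (w19 n) [false] = 0 := by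
  funext j
  rw [actVec_singleton_apply]
  rcases lt_or_ge j.val (n / 2) with hj | hj
  · have hne : j ≠ j.rev := by
      simp only [ne_eq, Fin.ext_iff, Fin.val_rev]
      omega
    rw [delta19_false_fiber_of_lt hj, Finset.sum_pair hne, w19_rev he, add_neg_cancel]
    rfl
  · rw [delta19_false_fiber_of_le he hj, Finset.sum_empty]
    rfl

theorem delta19_ba_val (he : Even n) (p : Fin n) :
    (wordAct (delta19 n) p [false, true]).val
      = if p.val < n / 2 then p.val + 1 else n - p.val := by
  have hn : n % 2 = 0 := Nat.even_iff.mp he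
  have hp := p.isLt
  change (cyc (delta19 n p false)).val = _
  rw [delta19_false]
  split_ifs with h
  · exact Nat.mod_eq_of_lt (by omega)
  · change (p.rev.val + 1) % n = _
    rw [Fin.val_rev, Nat.mod_eq_of_lt (by omega)]
    omega

theorem delta19_ba_replicate_val (he : Even n) (k : ℕ) {p : Fin n} (hp : p.val ≤ n / 2)
    (hk : n / 2 ≤ p.val + k) :
    (wordAct (delta19 n) p (List.replicate k [false, true]).flatten).val = n / 2 := by
  have hn : n % 2 = 0 := Nat.even_iff.mp he
  induction k generalizing p with
  | zero => exact le_antisymm hp hk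
  | succ k ih =>
    rw [List.replicate_succ, List.flatten_cons, wordAct_append]
    have hstep := delta19_ba_val he p
    apply ih <;> split_ifs at hstep <;> omega

theorem delta19_reset_val (he : Even n) (p : Fin n) :
    (wordAct (delta19 n) p ((List.replicate (n / 2) [false, true]).flatten ++ [false])).val
      = n / 2 - 1 := by
  have hn : n % 2 = 0 := Nat.even_iff.mp he
  have hp := p.isLt
  have hsplit : List.replicate (n / 2) [false, true]
      = [false, true] :: List.replicate (n / 2 - 1) [false, true] := by
    rw [← List.replicate_succ]
    congr
    omega
  have hstep := delta19_ba_val he p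
  have hmid : (wordAct (delta19 n) (wordAct (delta19 n) p [false, true])
      (List.replicate (n / 2 - 1) [false, true]).flatten).val = n / 2 :=
    delta19_ba_replicate_val he _ (by split_ifs at hstep <;> omega)
      (by split_ifs at hstep <;> omega)
  rw [hsplit, List.flatten_cons, wordAct_append, wordAct_append, wordAct_singleton,
    delta19_false]
  simp [hmid, Fin.val_rev]
  omega

end Automaton

theorem stmt19_general (n : ℕ) (he : Even n) :
    (∀ p q : Fin n,
        wordAct (delta19 n) p ((List.replicate (n / 2) [false, true]).flatten ++ [false])
          = wordAct (delta19 n) q ((List.replicate (n / 2) [false, true]).flatten ++ [false])) ∧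
    actVec (delta19 n) (w19 n) [true] = (-1 : ℂ) • w19 n ∧
    actVec (delta19 n) (w19 n) [false] = 0 ∧
    (∀ u : List Bool, ∃ c : ℂ, actVec (delta19 n) (w19 n) u = c • w19 n) := by
  refine ⟨fun p q => Fin.ext ?_, actVec_delta19_true he, actVec_delta19_false he,
    exists_actVec_eq_smul_of_forall_singleton _ (fun x => if x then -1 else 0) ?_⟩
  · rw [delta19_reset_val he p, delta19_reset_val he q]
  · rintro (_ | _)
    · simp [actVec_delta19_false he]
    · exact actVec_delta19_true he

theorem stmt19 (n : ℕ) (hn : 0 < n) (he : Even n) :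
    (∀ p q : Fin n,
        wordAct (delta19 n) p ((List.replicate (n / 2) [false, true]).flatten ++ [false])
          = wordAct (delta19 n) q ((List.replicate (n / 2) [false, true]).flatten ++ [false])) ∧
    actVec (delta19 n) (w19 n) [true] = (-1 : ℂ) • w19 n ∧
    actVec (delta19 n) (w19 n) [false] = 0 ∧
    (∀ u : List Bool, ∃ c : ℂ, actVec (delta19 n) (w19 n) u = c • w19 n) :=
  stmt19_general n he
end
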